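/- Value difference identity between two MDPs (Lemma B.5, from Dann et al.). Consider two finite episodic MDPs M' and M'' on the same finite state space 𝒮, action space 𝒜, and horizon H, with rewards r'_h, r''_h : 𝒮×𝒜 → ℝ and transition kernels P'_h, P''_h respectively, and let V'_h, V''_h be the corresponding value functions of a fixed policy π. For a state s and step h, define the occupancies of the M''-process started at s at step h: w_h(s̃,a) = 1[s̃ = s]·π(a|s̃,h) and w_{i+1}(s',a') = Σ_{s̃,a} w_i(s̃,a) P''_i(s'|s̃,a) π(a'|s',i+1) for i = h,…,H−1. Then for every policy π, every h ∈ {1,…,H}, and every s ∈ 𝒮: V'_h(s) − V''_h(s) = Σ_{i=h}^H Σ_{(s_i,a_i)} w_i(s_i,a_i) · [ r'_i(s_i,a_i) − r''_i(s_i,a_i) + Σ_{s'} (P'_i(s'|s_i,a_i) − P''_i(s'|s_i,a_i)) V'_{i+1}(s') ]. -/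
import Mathlib


open Finset

/-- A (non-stationary) policy for a finite episodic MDP. -/
structure EpiPolicy (S A : Type) [Fintype A] where
  p : S → ℕ → A → ℝ
  nonneg : ∀ s h a, 0 ≤ p s h a
  sum_one : ∀ s h, ∑ a, p s h a = 1

/-- `valAux P r π k h s` is the value of policy `π` at state `s` and (0-indexed) step `h`
when `k` steps remain; the value function at step `h` of a horizon-`H` MDP is
`valAux P r π (H - h) h`. -/
noncomputable def valAux {S A : Type} [Fintype S] [Fintype A]
    (P : ℕ → S → A → S → ℝ) (r : ℕ → S → A → ℝ) (π : EpiPolicy S A) :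
    ℕ → ℕ → S → ℝ
  | 0, _, _ => 0
  | k + 1, h, s =>
      ∑ a, π.p s h a * (r h s a + ∑ s', P h s a s' * valAux P r π k (h + 1) s')

/-- `occFrom P π s0 h k` is the state-action occupancy at step `h + k` of the process
that starts at state `s0` at (0-indexed) step `h` and follows `π` with transitions `P`. -/
noncomputable def occFrom {S A : Type} [Fintype S] [Fintype A] [DecidableEq S]
    (P : ℕ → S → A → S → ℝ) (π : EpiPolicy S A) (s0 : S) (h : ℕ) : ℕ → S × A → ℝ
  | 0 => fun q => (if q.1 = s0 then 1 else 0) * π.p q.1 h q.2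
  | k + 1 => fun q =>
      ∑ q' : S × A, occFrom P π s0 h k q' * P (h + k) q'.1 q'.2 q.1 *
        π.p q.1 (h + k + 1) q.2

/-- Front-unrolling of the occupancy recursion. -/
lemma occFrom_step {S A : Type} [Fintype S] [Fintype A] [DecidableEq S]
    (P : ℕ → S → A → S → ℝ) (π : EpiPolicy S A) (s : S) (h k : ℕ) (q : S × A) :
    occFrom P π s h (k + 1) q =
      ∑ a, π.p s h a * ∑ s', P h s a s' * occFrom P π s' (h + 1) k q := by
  induction k generalizing q with
  | zero =>
      simp only [occFrom, Fintype.sum_prod_type, ite_mul, one_mul, zero_mul, add_zero]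
      rw [Finset.sum_eq_single s (by intro b _ hb; simp [hb]) (by simp)]
      simp only [eq_self_iff_true, if_true, mul_ite, mul_zero, Finset.sum_ite_eq,
        Finset.mem_univ]
      apply Finset.sum_congr rfl; intro a _
      ring
  | succ k ih =>
      show (∑ q' : S × A, occFrom P π s h (k + 1) q' * P (h + (k + 1)) q'.1 q'.2 q.1 *
          π.p q.1 (h + (k + 1) + 1) q.2) = _
      simp only [ih, Finset.sum_mul, Finset.mul_sum]
      rw [Finset.sum_comm]
      apply Finset.sum_congr rfl; intro a _
      rw [Finset.sum_comm]
      apply Finset.sum_congr rfl; intro s' _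
      have hocc : occFrom P π s' (h + 1) (k + 1) q =
          ∑ q' : S × A, occFrom P π s' (h + 1) k q' * P (h + 1 + k) q'.1 q'.2 q.1 *
            π.p q.1 (h + 1 + k + 1) q.2 := rfl
      rw [hocc, Finset.mul_sum, Finset.mul_sum]
      apply Finset.sum_congr rfl; intro q' _
      ring_nf

lemma swap4 {S A : Type} [Fintype S] [Fintype A] [DecidableEq S]
    (P'' : ℕ → S → A → S → ℝ) (π : EpiPolicy S A) (s : S) (h n : ℕ)
    (G : ℕ → S × A → ℝ) :
    (∑ k ∈ Finset.range n, ∑ q : S × A, occFrom P'' π s h (k + 1) q * G k q) =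
      ∑ a, π.p s h a * ∑ s', P'' h s a s' *
        ∑ k ∈ Finset.range n, ∑ q : S × A, occFrom P'' π s' (h + 1) k q * G k q := by
  simp only [occFrom_step, Finset.sum_mul, Finset.mul_sum]
  rw [Finset.sum_comm]
  conv_lhs => enter [2, q]; rw [Finset.sum_comm]
  conv_lhs => enter [2, q, 2, a]; rw [Finset.sum_comm]
  rw [Finset.sum_comm]
  conv_lhs => enter [2, a]; rw [Finset.sum_comm]
  conv_lhs => enter [2, a, 2, s']; rw [Finset.sum_comm]
  apply Finset.sum_congr rfl; intro a _
  apply Finset.sum_congr rfl; intro s' _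
  apply Finset.sum_congr rfl; intro k _
  apply Finset.sum_congr rfl; intro q _
  ring

/-- General form of the value difference identity, by induction on the number of
remaining steps. -/
lemma value_difference_aux {S A : Type} [Fintype S] [Fintype A] [DecidableEq S]
    (P' P'' : ℕ → S → A → S → ℝ) (r' r'' : ℕ → S → A → ℝ) (π : EpiPolicy S A) :
    ∀ (n h : ℕ) (s : S),
      valAux P' r' π n h s - valAux P'' r'' π n h s =
        ∑ k ∈ Finset.range n, ∑ q : S × A,
          occFrom P'' π s h k q *
            (r' (h + k) q.1 q.2 - r'' (h + k) q.1 q.2 +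
              ∑ s', (P' (h + k) q.1 q.2 s' - P'' (h + k) q.1 q.2 s') *
                valAux P' r' π (n - (k + 1)) (h + k + 1) s') := by
  intro n
  induction n with
  | zero => intro h s; simp [valAux]
  | succ n ih =>
      intro h s
      rw [Finset.sum_range_succ']
      -- the k = 0 term
      have h0 : (∑ q : S × A, occFrom P'' π s h 0 q *
            (r' (h + 0) q.1 q.2 - r'' (h + 0) q.1 q.2 +
              ∑ s', (P' (h + 0) q.1 q.2 s' - P'' (h + 0) q.1 q.2 s') *
                valAux P' r' π (n + 1 - (0 + 1)) (h + 0 + 1) s')) =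
          ∑ a, π.p s h a * (r' h s a - r'' h s a +
            ∑ s', (P' h s a s' - P'' h s a s') * valAux P' r' π n (h + 1) s') := by
        simp only [occFrom, Fintype.sum_prod_type, add_zero, Nat.add_sub_cancel,
          ite_mul, one_mul, zero_mul]
        rw [Finset.sum_eq_single s (by intro b _ hb; simp [hb]) (by simp)]
        simp
      -- the k ≥ 1 terms
      have h1 : (∑ k ∈ Finset.range n, ∑ q : S × A, occFrom P'' π s h (k + 1) q *
            (r' (h + (k + 1)) q.1 q.2 - r'' (h + (k + 1)) q.1 q.2 +
              ∑ s', (P' (h + (k + 1)) q.1 q.2 s' - P'' (h + (k + 1)) q.1 q.2 s') *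
                valAux P' r' π (n + 1 - (k + 1 + 1)) (h + (k + 1) + 1) s')) =
          ∑ a, π.p s h a * ∑ s', P'' h s a s' *
            (valAux P' r' π n (h + 1) s' - valAux P'' r'' π n (h + 1) s') := by
        have key : ∀ s' : S, valAux P' r' π n (h + 1) s' - valAux P'' r'' π n (h + 1) s' =
            ∑ k ∈ Finset.range n, ∑ q : S × A, occFrom P'' π s' (h + 1) k q *
              (r' (h + (k + 1)) q.1 q.2 - r'' (h + (k + 1)) q.1 q.2 +
                ∑ s'', (P' (h + (k + 1)) q.1 q.2 s'' - P'' (h + (k + 1)) q.1 q.2 s'') *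
                  valAux P' r' π (n + 1 - (k + 1 + 1)) (h + (k + 1) + 1) s'') := by
          intro s'
          rw [ih (h + 1) s']
          apply Finset.sum_congr rfl; intro k hk
          apply Finset.sum_congr rfl; intro q _
          have e1 : h + 1 + k = h + (k + 1) := by ring
          have e3 : n - (k + 1) = n + 1 - (k + 1 + 1) := by omega
          rw [e1, e3]
        rw [swap4 P'' π s h n (fun k q =>
          r' (h + (k + 1)) q.1 q.2 - r'' (h + (k + 1)) q.1 q.2 +
            ∑ s', (P' (h + (k + 1)) q.1 q.2 s' - P'' (h + (k + 1)) q.1 q.2 s') *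
              valAux P' r' π (n + 1 - (k + 1 + 1)) (h + (k + 1) + 1) s')]
        apply Finset.sum_congr rfl; intro a _
        congr 1
        apply Finset.sum_congr rfl; intro s' _
        rw [key s']
      rw [h0, h1]
      show (∑ a, π.p s h a * (r' h s a + ∑ s', P' h s a s' * valAux P' r' π n (h + 1) s')) -
          (∑ a, π.p s h a * (r'' h s a + ∑ s', P'' h s a s' * valAux P'' r'' π n (h + 1) s')) = _
      rw [← Finset.sum_sub_distrib, ← Finset.sum_add_distrib]
      apply Finset.sum_congr rfl; intro a _
      rw [show (∑ s', (P' h s a s' - P'' h s a s') * valAux P' r' π n (h + 1) s') =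
          (∑ s', P' h s a s' * valAux P' r' π n (h + 1) s') -
            ∑ s', P'' h s a s' * valAux P' r' π n (h + 1) s' by
        rw [← Finset.sum_sub_distrib]; apply Finset.sum_congr rfl; intro s' _; ring]
      rw [show (∑ s', P'' h s a s' *
            (valAux P' r' π n (h + 1) s' - valAux P'' r'' π n (h + 1) s')) =
          (∑ s', P'' h s a s' * valAux P' r' π n (h + 1) s') -
            ∑ s', P'' h s a s' * valAux P'' r'' π n (h + 1) s' by
        rw [← Finset.sum_sub_distrib]; apply Finset.sum_congr rfl; intro s' _; ring]
      ring

/-- **Value difference identity between two MDPs (Lemma B.5, Dann et al.).**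
For two episodic MDPs `M'` and `M''` on the same state-action space and horizon,
with rewards `r', r''` and transitions `P', P''`, and any policy `π`, step `h` (0-indexed,
`h < H`) and state `s`:
`V'_h(s) - V''_h(s) = ∑_{i=h}^{H-1} ∑_{(s_i,a_i)} w_i(s_i,a_i) ·
  (r'_i - r''_i + (P'_i - P''_i) V'_{i+1})(s_i,a_i)`,
where `w_i` is the occupancy at step `i` of the `M''`-process started at `s` at step `h`. -/
theorem value_difference_identity
    (S A : Type) [Fintype S] [Fintype A] [DecidableEq S]
    (H : ℕ) (P' P'' : ℕ → S → A → S → ℝ) (r' r'' : ℕ → S → A → ℝ)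
    (hP' : ∀ h s a, (∀ s', 0 ≤ P' h s a s') ∧ ∑ s', P' h s a s' = 1)
    (hP'' : ∀ h s a, (∀ s', 0 ≤ P'' h s a s') ∧ ∑ s', P'' h s a s' = 1)
    (π : EpiPolicy S A) (h : ℕ) (hh : h < H) (s : S) :
    valAux P' r' π (H - h) h s - valAux P'' r'' π (H - h) h s =
      ∑ k ∈ Finset.range (H - h), ∑ q : S × A,
        occFrom P'' π s h k q *
          (r' (h + k) q.1 q.2 - r'' (h + k) q.1 q.2 +
            ∑ s', (P' (h + k) q.1 q.2 s' - P'' (h + k) q.1 q.2 s') *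
              valAux P' r' π (H - (h + k + 1)) (h + k + 1) s') := by
  have hk : ∀ k : ℕ, H - h - (k + 1) = H - (h + k + 1) := fun k => by omega
  rw [value_difference_aux P' P'' r' r'' π (H - h) h s]
  simp only [hk]
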